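/- For every integer n ≥ 3, the sum over i = 1 to n−2 of sin(iπ/n) / sin((i+1)π/n) equals (n−1)·cos(π/n). -/

import Mathlib

/-!
Since `sin (iπ/n) = sin ((i+1)π/n) cos (π/n) - cos ((i+1)π/n) sin (π/n)`, each summand equals
`cos (π/n) - sin (π/n) cot ((i+1)π/n)`. The cotangents `cot (kπ/n)`, `0 < k < n`, cancel in pairs
under `k ↦ n - k`, so those with `2 ≤ k < n` add up to `-cot (π/n)`, and
`sin (π/n) cot (π/n) = cos (π/n)` supplies the last copy of `cos (π/n)`.
-/

open Real Finset

lemma Real.cot_pi_sub (x : ℝ) : cot (π - x) = -cot x := by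
  simp [cot_eq_cos_div_sin, neg_div]

lemma Real.sin_sub_div_sin {x : ℝ} (y : ℝ) (hx : sin x ≠ 0) :
    sin (x - y) / sin x = cos y - sin y * cot x := by
  rw [sin_sub, cot_eq_cos_div_sin]
  field_simp

lemma Real.sin_natCast_mul_pi_div_pos {k n : ℕ} (hk : 0 < k) (hkn : k < n) :
    0 < sin (k * π / n) := by
  have hk' : (0 : ℝ) < k := by exact_mod_cast hk
  have hkn' : (k : ℝ) < n := by exact_mod_cast hkn
  have hn : (0 : ℝ) < n := hk'.trans hkn'
  apply sin_pos_of_pos_of_lt_pi (div_pos (mul_pos hk' pi_pos) hn)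
  rw [div_lt_iff₀ hn]
  nlinarith [pi_pos]

lemma Real.sum_cot_natCast_mul_pi_div_eq_zero (n : ℕ) :
    ∑ k ∈ Ico 1 n, cot (k * π / n) = 0 := by
  have hreflect : ∑ k ∈ Ico 1 n, cot (k * π / n) = -∑ k ∈ Ico 1 n, cot (k * π / n) := by
    calc ∑ k ∈ Ico 1 n, cot (k * π / n)
        = ∑ k ∈ Ico 1 n, cot (↑(n - k) * π / n) := by
          simpa using (sum_Ico_reflect (fun k : ℕ => cot (k * π / n)) 1 n.le_succ).symm
      _ = ∑ k ∈ Ico 1 n, -cot (k * π / n) := by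
          refine sum_congr rfl fun k hk => ?_
          obtain ⟨-, hkn⟩ := mem_Ico.mp hk
          have hn : (n : ℝ) ≠ 0 := by exact_mod_cast (by omega : n ≠ 0)
          rw [Nat.cast_sub hkn.le, sub_mul, sub_div, mul_div_cancel_left₀ _ hn, cot_pi_sub]
      _ = -∑ k ∈ Ico 1 n, cot (k * π / n) := sum_neg_distrib _
  linarith

theorem sum_sin_ratio_pred_eq (n : ℕ) (hn : 3 ≤ n) :
    ∑ i ∈ Finset.Icc 1 (n - 2),
      Real.sin (i * Real.pi / n) / Real.sin ((i + 1) * Real.pi / n) =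
      (n - 1 : ℝ) * Real.cos (Real.pi / n) := by
  have hsin : 0 < sin (π / n) := by
    simpa using sin_natCast_mul_pi_div_pos (n := n) one_pos (by omega)
  have hIcc : Icc 1 (n - 2) = Ico 1 (n - 1) := by
    rw [show n - 2 = n - 1 - 1 by omega, Icc_sub_one_right_eq_Ico_of_not_isMin (by simp; omega)]
  have hterm (i : ℕ) (hi : i ∈ Ico 1 (n - 1)) : sin (i * π / n) / sin ((i + 1) * π / n) =
      cos (π / n) - sin (π / n) * cot (↑(i + 1) * π / n) := by
    have hpos := sin_natCast_mul_pi_div_pos (n := n) i.succ_pos (by simp at hi; omega)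
    push_cast at hpos ⊢
    rw [← sin_sub_div_sin _ hpos.ne', add_mul, add_div, one_mul, add_sub_cancel_right]
  have hcot : ∑ k ∈ Ico 2 n, cot (k * π / n) = -cot (π / n) := by
    have := sum_cot_natCast_mul_pi_div_eq_zero n
    rw [sum_eq_sum_Ico_succ_bot (by omega)] at this
    simp only [Nat.cast_one, one_mul] at this
    linarith
  calc ∑ i ∈ Icc 1 (n - 2), sin (i * π / n) / sin ((i + 1) * π / n)
      = ∑ i ∈ Ico 1 (n - 1), (cos (π / n) - sin (π / n) * cot (↑(i + 1) * π / n)) := by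
        rw [hIcc]
        exact sum_congr rfl hterm
    _ = (n - 2 : ℕ) * cos (π / n) - sin (π / n) * ∑ k ∈ Ico 2 n, cot (k * π / n) := by
        rw [sum_sub_distrib, sum_const, Nat.card_Ico, nsmul_eq_mul, ← mul_sum,
          sum_Ico_add' (fun k : ℕ => cot (k * π / n)), Nat.sub_add_cancel (by omega)]
        rfl
    _ = (n - 1 : ℝ) * cos (π / n) := by
        rw [hcot, cot_eq_cos_div_sin, Nat.cast_sub (by omega)]
        field_simp
        ring
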